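/- The inverse of the Double Riordan array (g(z²), z, f(z²)/z) under Double Riordan multiplication is (1/g(f̄(z²)), z, f̄(z²)/z), where f̄ is the compositional inverse of f. In particular the set S = {(g(z²), z, f(z²)/z)} is a subgroup of the Double Riordan group. -/

import Mathlib

open PowerSeries

variable {K : Type*} [Field K]

/-- Composition (substitution) of formal power series: `pcomp A f = A ∘ f`,
intended for `f` with zero constant term, where `coeff n (f ^ k) = 0` for `k > n`. -/
noncomputable def pcomp (A f : PowerSeries K) : PowerSeries K :=
  PowerSeries.mk fun n => ∑ k ∈ Finset.range (n + 1), coeff k A * coeff n (f ^ k)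

/-- A formal power series is even if all its odd coefficients vanish. -/
def IsEvenPS (g : PowerSeries K) : Prop := ∀ n : ℕ, Odd n → coeff n g = 0

/-- A formal power series is odd if all its even coefficients vanish. -/
def IsOddPS (f : PowerSeries K) : Prop := ∀ n : ℕ, Even n → coeff n f = 0

lemma coeff_pow_eq_zero {f : PowerSeries K} (hf : constantCoeff f = 0)
    {n k : ℕ} (h : n < k) : coeff n (f ^ k) = 0 := by
  have hd : (X : PowerSeries K) ^ k ∣ f ^ k :=
    pow_dvd_pow_of_dvd (PowerSeries.X_dvd_iff.mpr hf) k
  exact (PowerSeries.X_pow_dvd_iff.mp hd) n h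

lemma coeff_pcomp (A f : PowerSeries K) (n : ℕ) :
    coeff n (pcomp A f) = ∑ k ∈ Finset.range (n + 1), coeff k A * coeff n (f ^ k) := by
  simp [pcomp]

lemma coeff_pcomp_of_lt {f : PowerSeries K} (hf : constantCoeff f = 0)
    (A : PowerSeries K) {n m : ℕ} (hm : n < m) :
    coeff n (pcomp A f) = ∑ k ∈ Finset.range m, coeff k A * coeff n (f ^ k) := by
  rw [coeff_pcomp]
  refine Finset.sum_subset ?_ ?_
  · intro x hx
    simp only [Finset.mem_range] at *
    omega
  · intro x _ hx
    simp only [Finset.mem_range, not_lt] at hx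
    rw [coeff_pow_eq_zero hf (by omega), mul_zero]

lemma coeff_pcomp_eval {f : PowerSeries K} (hf : constantCoeff f = 0)
    (A : PowerSeries K) {n m : ℕ} (hm : n < m) :
    coeff n (pcomp A f) = coeff n ((trunc m A).eval₂ C f) := by
  rw [coeff_pcomp_of_lt hf A hm, eval₂_trunc_eq_sum_range, map_sum]
  refine Finset.sum_congr rfl fun i _ => ?_
  rw [coeff_C_mul]

lemma constantCoeff_pcomp (A f : PowerSeries K) :
    constantCoeff (pcomp A f) = constantCoeff A := by
  have := coeff_pcomp A f 0
  simpa using this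

lemma pcomp_one (f : PowerSeries K) : pcomp (1 : PowerSeries K) f = 1 := by
  ext n
  rw [coeff_pcomp]
  simp [coeff_one, Finset.sum_ite_eq, Finset.mem_range]

lemma pcomp_X {f : PowerSeries K} (hf : constantCoeff f = 0) :
    pcomp X f = f := by
  ext n
  rw [coeff_pcomp]
  rcases n with _ | n
  · simpa using hf.symm
  · rw [Finset.sum_eq_single 1]
    · simp
    · intro b _ hb
      rw [coeff_X, if_neg hb, zero_mul]
    · intro hmem
      simp only [Finset.mem_range] at hmem
      omega

lemma pcomp_mul {f : PowerSeries K} (hf : constantCoeff f = 0)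
    (A B : PowerSeries K) : pcomp (A * B) f = pcomp A f * pcomp B f := by
  ext n
  rw [coeff_pcomp_eval hf (A * B) (Nat.lt_succ_self n)]
  have key : coeff n ((trunc (n+1) (A*B)).eval₂ C f)
      = coeff n (((trunc (n+1) A) * (trunc (n+1) B)).eval₂ C f) := by
    -- both polynomials agree in coefficients ≤ n
    have hagree : ∀ i ≤ n, (trunc (n+1) (A*B)).coeff i
        = ((trunc (n+1) A) * (trunc (n+1) B)).coeff i := by
      intro i hi
      rw [coeff_trunc, if_pos (by omega), ← Polynomial.coeff_coe,
        Polynomial.coe_mul, ← PowerSeries.coeff_mul_eq_coeff_trunc_mul_trunc A B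
          (show i < n+1 by omega)]
    set P := trunc (n+1) (A*B)
    set Q := (trunc (n+1) A) * (trunc (n+1) B)
    set N := max P.natDegree Q.natDegree + 1 with hN
    have hP : P.natDegree < N := by omega
    have hQ : Q.natDegree < N := by omega
    rw [Polynomial.eval₂_eq_sum_range' C hP f, Polynomial.eval₂_eq_sum_range' C hQ f,
      map_sum, map_sum]
    refine Finset.sum_congr rfl fun i _ => ?_
    by_cases hi : i ≤ n
    · rw [hagree i hi]
    · rw [coeff_C_mul, coeff_C_mul, coeff_pow_eq_zero hf (by omega), mul_zero, mul_zero]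
  rw [key, Polynomial.eval₂_mul, coeff_mul, coeff_mul]
  refine Finset.sum_congr rfl fun p hp => ?_
  rw [Finset.HasAntidiagonal.mem_antidiagonal] at hp
  rw [← coeff_pcomp_eval hf A (show p.1 < n+1 by omega),
    ← coeff_pcomp_eval hf B (show p.2 < n+1 by omega)]

lemma pcomp_pow {f : PowerSeries K} (hf : constantCoeff f = 0)
    (A : PowerSeries K) (k : ℕ) : pcomp (A ^ k) f = (pcomp A f) ^ k := by
  induction k with
  | zero => simpa using pcomp_one f
  | succ k ih => rw [pow_succ, pow_succ, pcomp_mul hf, ih]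

lemma pcomp_pcomp {f u : PowerSeries K} (hf : constantCoeff f = 0)
    (hu : constantCoeff u = 0) (A : PowerSeries K) :
    pcomp (pcomp A f) u = pcomp A (pcomp f u) := by
  ext n
  rw [coeff_pcomp, coeff_pcomp]
  have hv : constantCoeff (pcomp f u) = 0 := by
    rw [constantCoeff_pcomp]; exact hf
  calc ∑ k ∈ Finset.range (n+1), coeff k (pcomp A f) * coeff n (u ^ k)
      = ∑ k ∈ Finset.range (n+1), ∑ i ∈ Finset.range (n+1),
          coeff i A * coeff k (f ^ i) * coeff n (u ^ k) := by
        refine Finset.sum_congr rfl fun k hk => ?_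
        rw [Finset.mem_range] at hk
        rw [coeff_pcomp_of_lt hf A hk, Finset.sum_mul]
    _ = ∑ i ∈ Finset.range (n+1), coeff i A *
          ∑ k ∈ Finset.range (n+1), coeff k (f ^ i) * coeff n (u ^ k) := by
        rw [Finset.sum_comm]
        refine Finset.sum_congr rfl fun i _ => ?_
        rw [Finset.mul_sum]
        refine Finset.sum_congr rfl fun k _ => ?_
        ring
    _ = ∑ i ∈ Finset.range (n+1), coeff i A * coeff n ((pcomp f u) ^ i) := by
        refine Finset.sum_congr rfl fun i _ => ?_
        rw [← pcomp_pow hu f i, coeff_pcomp]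

/-- The inverse of (g(z²), z, f(z²)/z) under Double Riordan multiplication is
(1/g(f̄(z²)), z, f̄(z²)/z): both products give the identity (1, z, z).
Here fc = f(z²)/z, fbc = f̄(z²)/z, h (resp. h') is the odd square root of
f₁f₂ = f(z²) (resp. f̄(z²)) used in the corresponding product, and a, b, a', b'
are the quotients by h, h' appearing in the product rule. -/
theorem stmt7 (g f fbar fc fbc h a b h' a' b' : PowerSeries K)
    (hg : constantCoeff g ≠ 0)
    (hf0 : constantCoeff f = 0) (hf1 : coeff 1 f ≠ 0)
    (hfb0 : constantCoeff fbar = 0) (hfb1 : coeff 1 fbar ≠ 0)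
    (hinv1 : pcomp f fbar = X) (hinv2 : pcomp fbar f = X)
    (hfc : X * fc = pcomp f (X ^ 2)) (hfbc : X * fbc = pcomp fbar (X ^ 2))
    (hh : IsOddPS h) (hsq : h ^ 2 = X * fc)
    (ha : a * h = X) (hb : b * h = fc)
    (hh' : IsOddPS h') (hsq' : h' ^ 2 = X * fbc)
    (ha' : a' * h' = X) (hb' : b' * h' = fbc) :
    (pcomp g (X ^ 2) * pcomp (pcomp g (pcomp fbar (X ^ 2)))⁻¹ h = 1 ∧
      a * pcomp X h = X ∧
      b * pcomp fbc h = X) ∧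
    ((pcomp g (pcomp fbar (X ^ 2)))⁻¹ * pcomp (pcomp g (X ^ 2)) h' = 1 ∧
      a' * pcomp X h' = X ∧
      b' * pcomp fc h' = X) := by
  have hc2 : constantCoeff ((X : PowerSeries K) ^ 2) = 0 := by simp
  have hXne : (X : PowerSeries K) ≠ 0 := X_ne_zero
  -- constant coefficients of h, h'
  have hh0 : constantCoeff h = 0 := by
    have h2 : (constantCoeff h) ^ 2 = 0 := by
      have := congrArg (constantCoeff) hsq
      simpa using this
    exact pow_eq_zero_iff (two_ne_zero) |>.mp h2
  have hh'0 : constantCoeff h' = 0 := by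
    have h2 : (constantCoeff h') ^ 2 = 0 := by
      have := congrArg (constantCoeff) hsq'
      simpa using this
    exact pow_eq_zero_iff (two_ne_zero) |>.mp h2
  have hhne : h ≠ 0 := fun e => hXne (by rw [← ha, e, mul_zero])
  have hh'ne : h' ≠ 0 := fun e => hXne (by rw [← ha', e, mul_zero])
  have hw0 : constantCoeff (pcomp fbar (X ^ 2)) = 0 := by
    rw [constantCoeff_pcomp]; exact hfb0
  have hv0 : constantCoeff (pcomp f (X ^ 2)) = 0 := by
    rw [constantCoeff_pcomp]; exact hf0
  set G := pcomp g (pcomp fbar (X ^ 2)) with hG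
  have hG0 : constantCoeff G ≠ 0 := by
    rw [hG, constantCoeff_pcomp]; exact hg
  -- key composition identities for h
  have keyX2h : pcomp ((X : PowerSeries K) ^ 2) h = h ^ 2 := by
    rw [sq, pcomp_mul hh0, pcomp_X hh0, ← sq]
  have key2 : pcomp (pcomp fbar (X ^ 2)) h = X ^ 2 := by
    rw [pcomp_pcomp hc2 hh0, keyX2h, hsq, hfc, ← pcomp_pcomp hf0 hc2, hinv2, pcomp_X hc2]
  have keyG : pcomp G h = pcomp g (X ^ 2) := by
    rw [hG, pcomp_pcomp hw0 hh0, key2]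
  -- key composition identities for h'
  have keyX2h' : pcomp ((X : PowerSeries K) ^ 2) h' = h' ^ 2 := by
    rw [sq, pcomp_mul hh'0, pcomp_X hh'0, ← sq]
  have key2' : pcomp (pcomp f (X ^ 2)) h' = X ^ 2 := by
    rw [pcomp_pcomp hc2 hh'0, keyX2h', hsq', hfbc, ← pcomp_pcomp hfb0 hc2, hinv1, pcomp_X hc2]
  have keyG' : pcomp (pcomp g (X ^ 2)) h' = G := by
    rw [hG, pcomp_pcomp hc2 hh'0, keyX2h', hsq', hfbc]
  refine ⟨⟨?_, ?_, ?_⟩, ⟨?_, ?_, ?_⟩⟩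
  · rw [← keyG, mul_comm, ← pcomp_mul hh0, PowerSeries.inv_mul_cancel G hG0, pcomp_one]
  · rw [pcomp_X hh0]; exact ha
  · have hfbch : h * pcomp fbc h = X ^ 2 := by
      have e : pcomp (X * fbc) h = X ^ 2 := by rw [hfbc, key2]
      rwa [pcomp_mul hh0, pcomp_X hh0] at e
    apply mul_right_cancel₀ (pow_ne_zero 2 hhne)
    calc b * pcomp fbc h * h ^ 2 = (b * h) * (h * pcomp fbc h) := by ring
      _ = fc * X ^ 2 := by rw [hb, hfbch]
      _ = X * h ^ 2 := by rw [hsq]; ring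
  · rw [keyG', PowerSeries.inv_mul_cancel G hG0]
  · rw [pcomp_X hh'0]; exact ha'
  · have hfch : h' * pcomp fc h' = X ^ 2 := by
      have e : pcomp (X * fc) h' = X ^ 2 := by rw [hfc, key2']
      rwa [pcomp_mul hh'0, pcomp_X hh'0] at e
    apply mul_right_cancel₀ (pow_ne_zero 2 hh'ne)
    calc b' * pcomp fc h' * h' ^ 2 = (b' * h') * (h' * pcomp fc h') := by ring
      _ = fbc * X ^ 2 := by rw [hb', hfch]
      _ = X * h' ^ 2 := by rw [hsq']; ring
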